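/- Let E : {0,1}^n × {0,1}^d → {0,1}^m be a (k, ε)-extractor and let B ⊆ {0,1}^n. Define POOR to be the set of left nodes u such that more than a 2ε fraction of the seeds w ∈ {0,1}^d satisfy that E(u,w) is ε-heavy for B. Then |POOR| < 2^k. -/

import Mathlib

open Finset

/-- Number of edges (counted with seed multiplicity) from the set `B` of left nodes
into the right node `p`, in the bipartite graph of `E`. -/
def edgesInto {n d m : ℕ} (E : (Fin n → Bool) → (Fin d → Bool) → (Fin m → Bool))
    (B : Finset (Fin n → Bool)) (p : Fin m → Bool) : ℕ :=
  (Finset.univ.filter fun uw : (Fin n → Bool) × (Fin d → Bool) =>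
      uw.1 ∈ B ∧ E uw.1 uw.2 = p).card

/-- A right node `p` is `ε`-heavy for `B` if it has more than `(1/ε)·avg` left
neighbors in `B`, where `avg = |B|·2^d/2^m`. -/
def IsHeavy {n d m : ℕ} (E : (Fin n → Bool) → (Fin d → Bool) → (Fin m → Bool))
    (B : Finset (Fin n → Bool)) (ε : ℚ) (p : Fin m → Bool) : Prop :=
  ε⁻¹ * ((B.card : ℚ) * 2 ^ d / 2 ^ m) < (edgesInto E B p : ℚ)

/-- `E` is a `(k, ε)`-extractor: for every set `T` of at least `2^k` left nodes and every
set `A` of right nodes, `|Prob[E(U_T, U_d) ∈ A] − |A|/2^m| < ε`. -/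
def IsExtractor {n d m : ℕ} (E : (Fin n → Bool) → (Fin d → Bool) → (Fin m → Bool))
    (k : ℕ) (ε : ℚ) : Prop :=
  ∀ T : Finset (Fin n → Bool), 2 ^ k ≤ T.card →
    ∀ A : Finset (Fin m → Bool),
      |(((Finset.univ.filter fun uw : (Fin n → Bool) × (Fin d → Bool) =>
            uw.1 ∈ T ∧ E uw.1 uw.2 ∈ A).card : ℚ) / ((T.card : ℚ) * 2 ^ d))
        - (A.card : ℚ) / 2 ^ m| < ε

/-!
By double counting, the `ε`-heavy right nodes `A` receive at most all `|B|·2^d` edges out of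
`B`, each more than `avg/ε` of them, so `|A| ≤ ε·2^m` (Markov). If POOR had `2^k` elements,
a uniform left node from POOR together with a uniform seed would land in `A` with probability
more than `2ε ≥ |A|/2^m + ε`, violating the extractor property for the pair `(POOR, A)`.
-/

section Counting

variable {α β : Type*} [Fintype α] [Fintype β]

theorem card_filter_fst_mem_and [DecidableEq α] (T : Finset α) (P : α → β → Prop)
    [∀ u, DecidablePred (P u)] :
    #{uw : α × β | uw.1 ∈ T ∧ P uw.1 uw.2} = ∑ u ∈ T, #{w | P u w} := by
  simp only [card_filter, Fintype.sum_prod_type, ite_and, sum_ite_irrel, sum_const_zero]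
  rw [Finset.sum_ite_mem, univ_inter]

theorem card_nsmul_lt_sum_of_lt {R : Type*} [AddCommMonoid R] [PartialOrder R]
    [IsOrderedCancelAddMonoid R] {A : Finset α} (hA : A.Nonempty) {f : α → R}
    (hf : ∀ p, 0 ≤ f p) {t : R} (ht : ∀ p ∈ A, t < f p) : #A • t < ∑ p, f p :=
  calc #A • t = ∑ _p ∈ A, t := (sum_const t).symm
    _ < ∑ p ∈ A, f p := sum_lt_sum_of_nonempty hA ht
    _ ≤ ∑ p, f p := sum_le_sum_of_subset_of_nonneg (subset_univ A) fun p _ _ => hf p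

theorem mul_card_lt_card_filter_fst_mem_and [DecidableEq α] {T : Finset α} (hT : T.Nonempty)
    (P : α → β → Prop) [∀ u, DecidablePred (P u)] {R : Type*} [CommSemiring R]
    [PartialOrder R] [IsStrictOrderedRing R] {c : R}
    (h : ∀ u ∈ T, c * Fintype.card β < #{w | P u w}) :
    c * (#T * Fintype.card β) < #{uw : α × β | uw.1 ∈ T ∧ P uw.1 uw.2} := by
  rw [card_filter_fst_mem_and, Nat.cast_sum]
  calc c * (#T * Fintype.card β) = ∑ _u ∈ T, c * Fintype.card β := by
        rw [sum_const, nsmul_eq_mul]; ring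
    _ < _ := sum_lt_sum_of_nonempty hT h

end Counting

theorem sum_edgesInto {n d m : ℕ} (E : (Fin n → Bool) → (Fin d → Bool) → (Fin m → Bool))
    (B : Finset (Fin n → Bool)) : ∑ p, edgesInto E B p = #B * 2 ^ d := by
  have h p := card_filter_fst_mem_and B (fun u w => E u w = p)
  simp only [edgesInto, h]
  rw [sum_comm]
  simp [sum_card_fiberwise_eq_card_filter]

theorem card_le_of_forall_isHeavy {n d m : ℕ}
    (E : (Fin n → Bool) → (Fin d → Bool) → (Fin m → Bool)) (B : Finset (Fin n → Bool))
    {ε : ℚ} (hε : 0 < ε) {A : Finset (Fin m → Bool)}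
    (hA : ∀ p ∈ A, IsHeavy E B ε p) : (#A : ℚ) ≤ ε * 2 ^ m := by
  rcases A.eq_empty_or_nonempty with rfl | hne
  · simp only [card_empty, Nat.cast_zero]; positivity
  have markov := card_nsmul_lt_sum_of_lt hne (fun p => (edgesInto E B p).cast_nonneg) hA
  rw [nsmul_eq_mul, ← Nat.cast_sum, sum_edgesInto, Nat.cast_mul, Nat.cast_pow,
    Nat.cast_ofNat] at markov
  set S : ℚ := #B * 2 ^ d
  have hS : 0 < S := lt_of_le_of_lt (by positivity) markov
  have key : #A / (ε * 2 ^ m) * S < 1 * S := by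
    calc #A / (ε * 2 ^ m) * S = #A * (ε⁻¹ * (S / 2 ^ m)) := by field_simp
      _ < 1 * S := by rwa [one_mul]
  exact ((div_lt_one (by positivity)).1 (lt_of_mul_lt_mul_right key hS.le)).le

open Classical in
theorem stmt6_general (n d m k : ℕ) (E : (Fin n → Bool) → (Fin d → Bool) → (Fin m → Bool))
    (ε : ℚ) (hE : IsExtractor E k ε) (B : Finset (Fin n → Bool)) :
    (Finset.univ.filter fun u : Fin n → Bool =>
        2 * ε * 2 ^ d <
          ((Finset.univ.filter fun w : Fin d → Bool => IsHeavy E B ε (E u w)).card : ℚ)).card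
      < 2 ^ k := by
  by_contra! hPOOR
  set A : Finset (Fin m → Bool) := {p | IsHeavy E B ε p}
  have hext := abs_sub_lt_iff.1 (hE _ hPOOR A)
  have hε : 0 < ε := by linarith [hext.1, hext.2]
  have hA : (#A : ℚ) / 2 ^ m ≤ ε := (div_le_iff₀ (by positivity)).2
    (card_le_of_forall_isHeavy E B hε fun p hp => (mem_filter.1 hp).2)
  have hPOOR_pos := (Nat.two_pow_pos k).trans_le hPOOR
  have hprob := mul_card_lt_card_filter_fst_mem_and (c := (2 * ε : ℚ)) (card_pos.1 hPOOR_pos)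
    (fun u w => E u w ∈ A) fun u hu => by simpa [A] using (mem_filter.1 hu).2
  rw [Fintype.card_fun, Fintype.card_bool, Fintype.card_fin, Nat.cast_pow, Nat.cast_ofNat,
    ← lt_div_iff₀ (mul_pos (Nat.cast_pos.2 hPOOR_pos) (by positivity))] at hprob
  linarith [hext.1]

open Classical in
theorem stmt6 (n d m k : ℕ) (E : (Fin n → Bool) → (Fin d → Bool) → (Fin m → Bool))
    (ε : ℚ) (hε : 0 < ε) (hE : IsExtractor E k ε) (B : Finset (Fin n → Bool)) :
    (Finset.univ.filter fun u : Fin n → Bool =>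
        2 * ε * 2 ^ d <
          ((Finset.univ.filter fun w : Fin d → Bool => IsHeavy E B ε (E u w)).card : ℚ)).card
      < 2 ^ k :=
  stmt6_general n d m k E ε hE B
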